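/- arXiv:1607.04626 — 5 statements merged into one kernel-verified Lean document; each statement's English description precedes it below -/
import Mathlib

section
/- Fix p > 2 and let h be analytic on the unit disk D with h'(z) = (1−z)^{−p} (principal branch). Let f = h + conj(h) = 2·Re(h) and let id(z) = z. Then J_f ≡ 0 on D, so β(f) = 0 and f ∈ B_H, and β(id) < ∞ so id ∈ B_H; however f + id ∉ B_H: indeed J_{f+id}(z) = 1 + 2·Re(h'(z)) and sup_{x∈(0,1)} (1−x²)²·|J_{f+id}(x)| = (1+x)²·(2+(1−x)^p)/(1−x)^{p−2} → ∞ as x → 1⁻. In particular, B_H is not closed under addition and hence is not a linear space. -/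
open Metric Set Filter

/-- Jacobian of the harmonic mapping `f = h + conj g`. -/
noncomputable def jacobian (h g : ℂ → ℂ) (z : ℂ) : ℝ :=
  ‖deriv h z‖ ^ 2 - ‖deriv g z‖ ^ 2

/-- The Bloch-type seminorm `β(f) = sup_{z ∈ 𝔻} (1 - |z|²) √|J_f(z)|`. -/
noncomputable def betaH (h g : ℂ → ℂ) : ℝ :=
  sSup ((fun z => (1 - ‖z‖ ^ 2) * Real.sqrt |jacobian h g z|) '' Metric.ball 0 1)

/-- Membership in the Bloch-type class `B_H`, i.e. `β(f) < ∞`. -/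
def InBH (h g : ℂ → ℂ) : Prop :=
  BddAbove ((fun z => (1 - ‖z‖ ^ 2) * Real.sqrt |jacobian h g z|) '' Metric.ball 0 1)

/-! Writing `f = h + conj h`, both summands have the same derivative, so `J_f ≡ 0`; and
`J_id ≡ 1`. Adding `id` to the analytic part gives `J = |h' + 1|² - |h'|² = 1 + 2 Re h'`, which on
the real segment is `1 + 2 (1 - x)^{-p}`: the weight `(1 - x²)²` removes only two of the `p > 2`
orders of the pole at `1`. -/

open scoped Topology

lemma jacobian_self (h : ℂ → ℂ) (z : ℂ) : jacobian h h z = 0 :=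
  sub_self _

lemma bloch_image_self (h : ℂ → ℂ) :
    (fun z => (1 - ‖z‖ ^ 2) * Real.sqrt |jacobian h h z|) '' ball 0 1 = {0} := by
  simp only [jacobian_self, abs_zero, Real.sqrt_zero, mul_zero]
  exact (nonempty_ball.2 one_pos).image_const 0

lemma betaH_self (h : ℂ → ℂ) : betaH h h = 0 := by
  rw [betaH, bloch_image_self, csSup_singleton]

lemma inBH_self (h : ℂ → ℂ) : InBH h h := by
  rw [InBH, bloch_image_self]
  exact bddAbove_singleton

lemma inBH_of_abs_jacobian_le {h g : ℂ → ℂ} {C : ℝ}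
    (hC : ∀ z ∈ ball (0 : ℂ) 1, |jacobian h g z| ≤ C) : InBH h g := by
  refine ⟨Real.sqrt C, ?_⟩
  rintro _ ⟨z, hz, rfl⟩
  have hz' : ‖z‖ < 1 := mem_ball_zero_iff.1 hz
  calc (1 - ‖z‖ ^ 2) * Real.sqrt |jacobian h g z|
      ≤ 1 * Real.sqrt C := by
        gcongr
        · nlinarith [norm_nonneg z]
        · exact hC z hz
    _ = Real.sqrt C := one_mul _

lemma inBH_id : InBH (fun z => z) (fun _ => 0) :=
  inBH_of_abs_jacobian_le (C := 1) fun z _ => by simp [jacobian]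

lemma jacobian_add_id_self {h : ℂ → ℂ} {z : ℂ} (hz : DifferentiableAt ℂ h z) :
    jacobian (fun w => h w + w) h z = 1 + 2 * (deriv h z).re := by
  rw [jacobian, deriv_fun_add hz differentiableAt_fun_id, deriv_id'', Complex.sq_norm,
    Complex.sq_norm, Complex.normSq_add]
  simp only [Complex.normSq_apply, mul_one, map_one]
  ring

lemma not_inBH_of_tendsto {h g : ℂ → ℂ} {l : Filter ℝ} [l.NeBot]
    (hl : ∀ᶠ x in l, x ∈ Ioo (-1 : ℝ) 1)
    (ht : Tendsto (fun x : ℝ => (1 - x ^ 2) ^ 2 * |jacobian h g x|) l atTop) :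
    ¬ InBH h g := by
  rintro ⟨M, hM⟩
  obtain ⟨x, hx, hgt⟩ := (hl.and (ht.eventually_gt_atTop (M ^ 2))).exists
  have hxM := hM ⟨(x : ℂ), by simpa [abs_lt] using hx, rfl⟩
  simp only [Complex.norm_real, Real.norm_eq_abs, sq_abs] at hxM
  have hw : 0 ≤ (1 - x ^ 2) * Real.sqrt |jacobian h g x| := by
    have : 0 ≤ 1 - x ^ 2 := by nlinarith [hx.1, hx.2]
    positivity
  have := pow_le_pow_left₀ hw hxM 2
  rw [mul_pow, Real.sq_sqrt (abs_nonneg _)] at this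
  linarith

lemma re_one_sub_ofReal_cpow {x : ℝ} (hx : x ≤ 1) (s : ℝ) :
    (((1 : ℂ) - x) ^ (s : ℂ)).re = (1 - x) ^ s := by
  rw [← Complex.ofReal_one, ← Complex.ofReal_sub, ← Complex.ofReal_cpow (sub_nonneg.2 hx),
    Complex.ofReal_re]

lemma one_sub_sq_sq_mul_eq {x p : ℝ} (hx : x < 1) :
    (1 - x ^ 2) ^ 2 * (1 + 2 * (1 - x) ^ (-p))
      = (1 + x) ^ 2 * (2 + (1 - x) ^ p) / (1 - x) ^ (p - 2) := by
  have ht : 0 < 1 - x := sub_pos.2 hx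
  rw [eq_div_iff (Real.rpow_pos_of_pos ht _).ne', Real.rpow_sub ht, Real.rpow_neg ht.le,
    Real.rpow_two]
  field_simp
  ring

lemma tendsto_one_sub_rpow_neg_nhdsLT {s : ℝ} (hs : s < 0) :
    Tendsto (fun x : ℝ => (1 - x) ^ s) (𝓝[<] 1) atTop := by
  refine (tendsto_rpow_neg_nhdsGT_zero hs).comp (tendsto_nhdsWithin_iff.2 ⟨?_, ?_⟩)
  · have h1 : Tendsto (fun x : ℝ => 1 - x) (𝓝 1) (𝓝 (1 - 1)) :=
      (continuous_const.sub continuous_id).tendsto 1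
    rw [sub_self] at h1
    exact h1.mono_left nhdsWithin_le_nhds
  · filter_upwards [self_mem_nhdsWithin] with x (hx : x < 1)
    exact sub_pos.2 hx

lemma tendsto_one_add_sq_mul_div_rpow_nhdsLT {p : ℝ} (hp : 2 < p) :
    Tendsto (fun x : ℝ => (1 + x) ^ 2 * (2 + (1 - x) ^ p) / (1 - x) ^ (p - 2)) (𝓝[<] 1) atTop := by
  refine tendsto_atTop_mono' _ ?_
    ((tendsto_one_sub_rpow_neg_nhdsLT (neg_lt_zero.2 (sub_pos.2 hp))).const_mul_atTop two_pos)
  filter_upwards [Ioo_mem_nhdsLT one_pos] with x hx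
  have ht : 0 < 1 - x := sub_pos.2 hx.2
  rw [Real.rpow_neg ht.le, ← div_eq_mul_inv]
  gcongr
  nlinarith [Real.rpow_nonneg ht.le p, hx.1]

/-- **`B_H` is not a linear space.**  For `p > 2` and `h` analytic on the disk with
`h'(z) = (1-z)^{-p}`, the mapping `f = h + conj h = 2 Re h` has `J_f ≡ 0`, hence `β(f) = 0`
and `f ∈ B_H`; the identity (with decomposition `id + conj 0`) lies in `B_H`; but
`f + id = (h + id) + conj h` has `J_{f+id} = 1 + 2 Re h'`, satisfies
`(1-x²)² |J_{f+id}(x)| = (1+x)²(2+(1-x)^p)/(1-x)^{p-2} → ∞` as `x → 1⁻`, so `f + id ∉ B_H`. -/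
theorem BH_not_linear_space (p : ℝ) (hp : 2 < p) (h : ℂ → ℂ)
    (hh : DifferentiableOn ℂ h (Metric.ball 0 1))
    (hd : ∀ z ∈ Metric.ball (0 : ℂ) 1, deriv h z = (1 - z) ^ (-(p : ℂ))) :
    (∀ z ∈ Metric.ball (0 : ℂ) 1, jacobian h h z = 0)
    ∧ betaH h h = 0
    ∧ InBH h h
    ∧ InBH (fun z => z) (fun _ => 0)
    ∧ (∀ z ∈ Metric.ball (0 : ℂ) 1,
        jacobian (fun w => h w + w) h z = 1 + 2 * (deriv h z).re)
    ∧ (∀ x ∈ Set.Ioo (0 : ℝ) 1,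
        (1 - x ^ 2) ^ 2 * |jacobian (fun w => h w + w) h (x : ℂ)|
          = (1 + x) ^ 2 * (2 + (1 - x) ^ p) / (1 - x) ^ (p - 2))
    ∧ Filter.Tendsto (fun x : ℝ => (1 - x ^ 2) ^ 2 * |jacobian (fun w => h w + w) h (x : ℂ)|)
        (nhdsWithin 1 (Set.Ioo 0 1)) Filter.atTop
    ∧ ¬ InBH (fun w => h w + w) h := by
  have hJ : ∀ z ∈ ball (0 : ℂ) 1, jacobian (fun w => h w + w) h z = 1 + 2 * (deriv h z).re :=
    fun z hz => jacobian_add_id_self (hh.differentiableAt (isOpen_ball.mem_nhds hz))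
  have hsegment : ∀ x ∈ Ioo (0 : ℝ) 1, (1 - x ^ 2) ^ 2 * |jacobian (fun w => h w + w) h (x : ℂ)|
      = (1 + x) ^ 2 * (2 + (1 - x) ^ p) / (1 - x) ^ (p - 2) := by
    rintro x ⟨hx0, hx1⟩
    have hxD : (x : ℂ) ∈ ball (0 : ℂ) 1 := by simpa [abs_lt] using ⟨by linarith, hx1⟩
    have hpos : 0 < 1 + 2 * (1 - x) ^ (-p) := by
      have := Real.rpow_nonneg (sub_nonneg.2 hx1.le) (-p)
      linarith
    rw [hJ x hxD, hd x hxD, ← Complex.ofReal_neg, re_one_sub_ofReal_cpow hx1.le,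
      abs_of_pos hpos, one_sub_sq_sq_mul_eq hx1]
  have htendsto : Tendsto (fun x : ℝ => (1 - x ^ 2) ^ 2 * |jacobian (fun w => h w + w) h (x : ℂ)|)
      (𝓝[<] 1) atTop := by
    refine (tendsto_one_add_sq_mul_div_rpow_nhdsLT hp).congr' ?_
    filter_upwards [Ioo_mem_nhdsLT one_pos] with x hx
    exact (hsegment x hx).symm
  rw [nhdsWithin_Ioo_eq_nhdsLT one_pos]
  exact ⟨fun z _ => jacobian_self h z, betaH_self h, inBH_self h, inBH_id, hJ, hsegment,
    htendsto, not_inBH_of_tendsto (Ioo_mem_nhdsLT (by norm_num)) htendsto⟩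
end

section
/- Let h be analytic on the unit disk D with h(z) = 2·(1−z)^{−1/2} (principal branch, so h'(z) = (1−z)^{−3/2}), and let g be analytic on D with g(0) = 0 and g'(z) = z·h'(z). Then the harmonic mapping f = h + conj(g) satisfies (1−|z|²)·√(J_f(z)) = ((1−|z|²)/|1−z|)^{3/2} ≤ 2√2 for all z ∈ D, so f ∈ B_H; on the other hand sup_{z∈D} (1−|z|²)·|h'(z)| = ∞, i.e. h is not an analytic Bloch function. Hence B_H strictly contains the harmonic Bloch space of mappings h + conj(g) with both h and g analytic Bloch functions. -/
/-! With dilatation `ω(z) = z` the Jacobian factors as `J_f = (1 - |z|²)|h'|²`, so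
`(1 - |z|²)√J_f = ((1 - |z|²)/|1 - z|)^{3/2}`, and `1 - |z|² ≤ 2|1 - z|` bounds this by `2^{3/2}`.
Along the radius `z = 1 - t` the analytic Bloch quantity `(1 - |z|²)|h'(z)|` equals
`(2 - t) t^{-1/2} → ∞`. -/

open Metric Set Filter

open Topology

theorem norm_cpow_neg_three_halves (w : ℂ) :
    ‖w ^ (-(3 / 2) : ℂ)‖ = ‖w‖ ^ (-(3 / 2) : ℝ) := by
  rw [← Complex.norm_cpow_real]
  norm_num

theorem jacobian_eq_of_deriv_eq_mul {h g : ℂ → ℂ} {z ω : ℂ}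
    (hω : deriv g z = ω * deriv h z) :
    jacobian h g z = (1 - ‖ω‖ ^ 2) * ‖deriv h z‖ ^ 2 := by
  rw [jacobian, hω, norm_mul]
  ring

theorem jacobian_nonneg_of_deriv_eq_mul {h g : ℂ → ℂ} {z ω : ℂ} (hω₁ : ‖ω‖ ≤ 1)
    (hω : deriv g z = ω * deriv h z) : 0 ≤ jacobian h g z := by
  rw [jacobian_eq_of_deriv_eq_mul hω]
  have : ‖ω‖ ^ 2 ≤ 1 := pow_le_one₀ (norm_nonneg ω) hω₁
  have : 0 ≤ 1 - ‖ω‖ ^ 2 := by linarith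
  positivity

theorem one_sub_norm_sq_le_two_mul_norm_one_sub {z : ℂ} (hz : ‖z‖ ≤ 1) :
    1 - ‖z‖ ^ 2 ≤ 2 * ‖1 - z‖ := by
  have h := norm_sub_norm_le (1 : ℂ) z
  rw [norm_one] at h
  nlinarith [norm_nonneg z]

namespace Real

theorem mul_sqrt_mul_sq {a : ℝ} (ha : 0 ≤ a) {b : ℝ} (hb : 0 ≤ b) :
    a * √(a * b ^ 2) = a ^ ((3 : ℝ) / 2) * b := by
  rw [sqrt_mul ha, sqrt_sq hb, sqrt_eq_rpow,
    show (3 : ℝ) / 2 = 1 + 1 / 2 by norm_num, rpow_add' ha (by norm_num), rpow_one]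
  ring

theorem rpow_mul_rpow_neg {a b : ℝ} (ha : 0 ≤ a) (hb : 0 ≤ b) (p : ℝ) :
    a ^ p * b ^ (-p) = (a / b) ^ p := by
  rw [div_rpow ha hb, rpow_neg hb, div_eq_mul_inv]

theorem two_rpow_three_halves : (2 : ℝ) ^ ((3 : ℝ) / 2) = 2 * √2 := by
  rw [show (3 : ℝ) / 2 = 1 + 1 / 2 by norm_num, rpow_add two_pos, rpow_one, sqrt_eq_rpow]

end Real

theorem mul_sqrt_jacobian_eq {h g : ℂ → ℂ} {z : ℂ} (hz : ‖z‖ < 1)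
    (hd : deriv h z = (1 - z) ^ (-(3 / 2) : ℂ)) (hgd : deriv g z = z * deriv h z) :
    (1 - ‖z‖ ^ 2) * √(jacobian h g z) = ((1 - ‖z‖ ^ 2) / ‖1 - z‖) ^ ((3 : ℝ) / 2) := by
  have hpos : 0 ≤ 1 - ‖z‖ ^ 2 := by nlinarith [norm_nonneg z]
  rw [jacobian_eq_of_deriv_eq_mul hgd, Real.mul_sqrt_mul_sq hpos (norm_nonneg _), hd,
    norm_cpow_neg_three_halves, ← Real.rpow_mul_rpow_neg hpos (norm_nonneg _)]

theorem div_norm_one_sub_rpow_le {z : ℂ} (hz : ‖z‖ < 1) :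
    ((1 - ‖z‖ ^ 2) / ‖1 - z‖) ^ ((3 : ℝ) / 2) ≤ 2 * √2 := by
  have hpos : 0 ≤ 1 - ‖z‖ ^ 2 := by nlinarith [norm_nonneg z]
  have hne : 0 < ‖1 - z‖ := norm_pos_iff.2 (sub_ne_zero.2 (fun h => by simp [← h] at hz))
  rw [← Real.two_rpow_three_halves]
  gcongr
  rw [div_le_iff₀ hne]
  linarith [one_sub_norm_sq_le_two_mul_norm_one_sub hz.le]

theorem not_bddAbove_image_of_tendsto {α β γ : Type*} [Preorder γ] [NoMaxOrder γ]
    {l : Filter β} [l.NeBot] {f : α → γ} {s : Set α} {u : β → α}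
    (hu : ∀ᶠ t in l, u t ∈ s) (hf : Tendsto (f ∘ u) l atTop) : ¬BddAbove (f '' s) := by
  rintro ⟨M, hM⟩
  obtain ⟨t, hts, htM⟩ := (hu.and (hf.eventually_gt_atTop M)).exists
  exact (hM (mem_image_of_mem f hts)).not_gt htM

theorem one_sub_norm_sq_mul_norm_cpow_neg_three_halves {t : ℝ} (ht : 0 < t) :
    (1 - ‖((1 - t : ℝ) : ℂ)‖ ^ 2) * ‖(1 - ((1 - t : ℝ) : ℂ)) ^ (-(3 / 2) : ℂ)‖
      = (2 - t) * t ^ (-(1 / 2) : ℝ) := by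
  rw [norm_cpow_neg_three_halves, Complex.norm_real, Real.norm_eq_abs, sq_abs,
    show (1 : ℂ) - ((1 - t : ℝ) : ℂ) = (t : ℂ) by push_cast; ring, Complex.norm_real,
    Real.norm_eq_abs, abs_of_pos ht,
    show (-(3 / 2) : ℝ) = -1 + -(1 / 2) by norm_num, Real.rpow_add ht, Real.rpow_neg_one]
  field_simp
  ring

theorem tendsto_one_sub_norm_sq_mul_norm_cpow_neg_three_halves :
    Tendsto (fun t : ℝ => (1 - ‖((1 - t : ℝ) : ℂ)‖ ^ 2) * ‖(1 - ((1 - t : ℝ) : ℂ)) ^ (-(3 / 2) : ℂ)‖)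
      (𝓝[>] 0) atTop := by
  refine tendsto_atTop_mono' _ ?_ (tendsto_rpow_neg_nhdsGT_zero (y := -(1 / 2)) (by norm_num))
  filter_upwards [Ioo_mem_nhdsGT (show (0 : ℝ) < 1 by norm_num)] with t ⟨ht0, ht1⟩
  rw [one_sub_norm_sq_mul_norm_cpow_neg_three_halves ht0]
  exact le_mul_of_one_le_left (by positivity) (by linarith)

theorem not_bddAbove_bloch_of_deriv_eq {h : ℂ → ℂ}
    (hd : ∀ z ∈ ball (0 : ℂ) 1, deriv h z = (1 - z) ^ (-(3 / 2) : ℂ)) :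
    ¬BddAbove ((fun z => (1 - ‖z‖ ^ 2) * ‖deriv h z‖) '' ball 0 1) := by
  have hmem : ∀ᶠ t in 𝓝[>] (0 : ℝ), ((1 - t : ℝ) : ℂ) ∈ ball (0 : ℂ) 1 := by
    filter_upwards [Ioo_mem_nhdsGT (show (0 : ℝ) < 1 by norm_num)] with t ⟨ht0, ht1⟩
    rw [mem_ball_zero_iff, Complex.norm_real, Real.norm_eq_abs, abs_lt]
    constructor <;> linarith
  refine not_bddAbove_image_of_tendsto hmem
    (tendsto_one_sub_norm_sq_mul_norm_cpow_neg_three_halves.congr' ?_)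
  filter_upwards [hmem] with t ht
  simp only [Function.comp_apply, hd _ ht]

theorem BH_strictly_contains_harmonic_Bloch_general (h g : ℂ → ℂ)
    (hd : ∀ z ∈ Metric.ball (0 : ℂ) 1, deriv h z = (1 - z) ^ (-(3 / 2) : ℂ))
    (hgd : ∀ z ∈ Metric.ball (0 : ℂ) 1, deriv g z = z * deriv h z) :
    (∀ z ∈ Metric.ball (0 : ℂ) 1,
        (1 - ‖z‖ ^ 2) * Real.sqrt (jacobian h g z)
            = ((1 - ‖z‖ ^ 2) / ‖1 - z‖) ^ ((3 : ℝ) / 2)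
        ∧ (1 - ‖z‖ ^ 2) * Real.sqrt (jacobian h g z) ≤ 2 * Real.sqrt 2)
    ∧ InBH h g
    ∧ ¬ BddAbove
        ((fun z => (1 - ‖z‖ ^ 2) * ‖deriv h z‖) '' Metric.ball 0 1) := by
  have hbound : ∀ z ∈ ball (0 : ℂ) 1, (1 - ‖z‖ ^ 2) * √(jacobian h g z) ≤ 2 * √2 := by
    intro z hz
    rw [mul_sqrt_jacobian_eq (mem_ball_zero_iff.1 hz) (hd z hz) (hgd z hz)]
    exact div_norm_one_sub_rpow_le (mem_ball_zero_iff.1 hz)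
  refine ⟨fun z hz => ⟨mul_sqrt_jacobian_eq (mem_ball_zero_iff.1 hz) (hd z hz) (hgd z hz),
    hbound z hz⟩, ⟨2 * √2, ?_⟩, not_bddAbove_bloch_of_deriv_eq hd⟩
  rintro _ ⟨z, hz, rfl⟩
  have hJ := jacobian_nonneg_of_deriv_eq_mul (mem_ball_zero_iff.1 hz).le (hgd z hz)
  simpa only [abs_of_nonneg hJ] using hbound z hz

/-- **`B_H` strictly contains Colonna's harmonic Bloch space.**  With
`h(z) = 2(1-z)^{-1/2}` (so `h'(z) = (1-z)^{-3/2}`), `g(0) = 0` and `g' = z·h'` (dilatation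
`ω(z) = z`), the harmonic mapping `f = h + conj g` satisfies
`(1-|z|²)√(J_f(z)) = ((1-|z|²)/|1-z|)^{3/2} ≤ 2√2`, so `f ∈ B_H`; yet
`sup_{z ∈ 𝔻} (1-|z|²)|h'(z)| = ∞`, i.e. `h` is not an analytic Bloch function. -/
theorem BH_strictly_contains_harmonic_Bloch (h g : ℂ → ℂ)
    (hh : DifferentiableOn ℂ h (Metric.ball 0 1))
    (hg : DifferentiableOn ℂ g (Metric.ball 0 1))
    (hval : ∀ z ∈ Metric.ball (0 : ℂ) 1, h z = 2 * (1 - z) ^ (-(1 / 2) : ℂ))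
    (hd : ∀ z ∈ Metric.ball (0 : ℂ) 1, deriv h z = (1 - z) ^ (-(3 / 2) : ℂ))
    (hg0 : g 0 = 0)
    (hgd : ∀ z ∈ Metric.ball (0 : ℂ) 1, deriv g z = z * deriv h z) :
    (∀ z ∈ Metric.ball (0 : ℂ) 1,
        (1 - ‖z‖ ^ 2) * Real.sqrt (jacobian h g z)
            = ((1 - ‖z‖ ^ 2) / ‖1 - z‖) ^ ((3 : ℝ) / 2)
        ∧ (1 - ‖z‖ ^ 2) * Real.sqrt (jacobian h g z) ≤ 2 * Real.sqrt 2)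
    ∧ InBH h g
    ∧ ¬ BddAbove
        ((fun z => (1 - ‖z‖ ^ 2) * ‖deriv h z‖) '' Metric.ball 0 1) :=
  BH_strictly_contains_harmonic_Bloch_general h g hd hgd
end

section
/- Let f = h + conj(g) be a sense-preserving harmonic mapping on the unit disk D with β(f) < ∞ (so f ∈ B_H), with g(0) = 0, and let c₀ = g'(0)/h'(0) be the value of the dilatation at 0. Then for all z ∈ D with |z| = r: max{ |h(z) − h(0)|, |g(z)| } ≤ β(f)·√((1+|c₀|)/(1−|c₀|))·r/√(1−r²). -/
open Metric Set Filter

open ComplexConjugate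

/-!
The dilatation `ω = g'/h'` is a holomorphic self-map of the disc with `ω 0 = c₀`, so the
Schwarz–Pick lemma gives `1 - |ω z|² ≥ (1 - |c₀|)/(1 + |c₀|) · (1 - |z|²)`. Since
`J_f = |h'|² (1 - |ω|²)`, the definition of `β(f)` turns this into
`|g'(z)| < |h'(z)| ≤ β(f) √((1 + |c₀|)/(1 - |c₀|)) (1 - |z|²)^(-3/2)`. Integrating along the
radius `[0, z]`, where `t ↦ t r / √(1 - r² t²)` is a primitive of `r (1 - r² t²)^(-3/2)`,
bounds both `h z - h 0` and `g z - g 0`.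
-/

namespace Complex

theorem norm_one_sub_conj_mul_sq_sub_norm_sub_sq (a v : ℂ) :
    ‖1 - conj a * v‖ ^ 2 - ‖a - v‖ ^ 2 = (1 - ‖a‖ ^ 2) * (1 - ‖v‖ ^ 2) := by
  simp only [Complex.sq_norm, normSq_apply, sub_re, sub_im, mul_re, mul_im, one_re, one_im, conj_re,
    conj_im]
  ring

theorem one_sub_norm_le_norm_one_sub_conj_mul (a : ℂ) {v : ℂ} (hv : ‖v‖ ≤ 1) :
    1 - ‖a‖ ≤ ‖1 - conj a * v‖ :=
  calc 1 - ‖a‖ ≤ 1 - ‖a‖ * ‖v‖ := by gcongr; exact mul_le_of_le_one_right (norm_nonneg a) hv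
    _ = ‖(1 : ℂ)‖ - ‖conj a * v‖ := by simp
    _ ≤ ‖1 - conj a * v‖ := norm_sub_norm_le _ _

theorem one_sub_conj_mul_ne_zero {a v : ℂ} (ha : ‖a‖ < 1) (hv : ‖v‖ ≤ 1) :
    1 - conj a * v ≠ 0 :=
  norm_pos_iff.mp <| (sub_pos.mpr ha).trans_le (one_sub_norm_le_norm_one_sub_conj_mul a hv)

theorem norm_sub_div_one_sub_conj_mul_lt_one {a v : ℂ} (ha : ‖a‖ < 1) (hv : ‖v‖ < 1) :
    ‖(a - v) / (1 - conj a * v)‖ < 1 := by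
  have hden := norm_pos_iff.mpr (one_sub_conj_mul_ne_zero ha hv.le)
  rw [norm_div, div_lt_one hden, ← sq_lt_sq₀ (norm_nonneg _) hden.le, ← sub_pos,
    norm_one_sub_conj_mul_sq_sub_norm_sub_sq]
  have := norm_nonneg a
  have := norm_nonneg v
  exact mul_pos (by nlinarith) (by nlinarith)

theorem one_sub_norm_mul_one_sub_norm_sq_le_of_mapsTo_ball {ω : ℂ → ℂ}
    (hd : DifferentiableOn ℂ ω (ball 0 1)) (hmaps : MapsTo ω (ball 0 1) (ball 0 1))
    {z : ℂ} (hz : z ∈ ball 0 1) :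
    (1 - ‖ω 0‖) * (1 - ‖z‖ ^ 2) ≤ (1 + ‖ω 0‖) * (1 - ‖ω z‖ ^ 2) := by
  set a := ω 0
  have ha : ‖a‖ < 1 := mem_ball_zero_iff.mp (hmaps (mem_ball_self one_pos))
  have hω : ∀ w ∈ ball (0 : ℂ) 1, ‖ω w‖ < 1 := fun w hw => mem_ball_zero_iff.mp (hmaps hw)
  -- compose with the disc automorphism exchanging `a` and `0`, then apply Schwarz
  have hschwarz : ‖(a - ω z) / (1 - conj a * ω z)‖ ≤ ‖z‖ := by
    refine norm_le_norm_of_mapsTo_ball (f := fun w => (a - ω w) / (1 - conj a * ω w))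
      ?_ ?_ (by simp [a]) (mem_ball_zero_iff.mp hz)
    · exact ((differentiableOn_const a).sub hd).div
        ((differentiableOn_const 1).sub ((differentiableOn_const _).mul hd))
        fun w hw => one_sub_conj_mul_ne_zero ha (hω w hw).le
    · exact fun w hw => mem_closedBall_zero_iff.mpr
        (norm_sub_div_one_sub_conj_mul_lt_one ha (hω w hw)).le
  have hid := norm_one_sub_conj_mul_sq_sub_norm_sub_sq a (ω z)
  set den := ‖1 - conj a * ω z‖
  have hden : 1 - ‖a‖ ≤ den := one_sub_norm_le_norm_one_sub_conj_mul a (hω z hz).le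
  have hnum : ‖a - ω z‖ ≤ ‖z‖ * den := by
    rwa [norm_div, div_le_iff₀ ((sub_pos.mpr ha).trans_le hden)] at hschwarz
  have hz1 : 0 ≤ 1 - ‖z‖ ^ 2 := by nlinarith [mem_ball_zero_iff.mp hz, norm_nonneg z]
  have key : (1 - ‖a‖) * ((1 - ‖a‖) * (1 - ‖z‖ ^ 2)) ≤ (1 - ‖a‖) * ((1 + ‖a‖) * (1 - ‖ω z‖ ^ 2)) :=
    calc (1 - ‖a‖) * ((1 - ‖a‖) * (1 - ‖z‖ ^ 2)) = (1 - ‖a‖) ^ 2 * (1 - ‖z‖ ^ 2) := by ring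
      _ ≤ den ^ 2 * (1 - ‖z‖ ^ 2) := by gcongr
      _ ≤ den ^ 2 - ‖a - ω z‖ ^ 2 := by nlinarith [pow_le_pow_left₀ (norm_nonneg _) hnum 2]
      _ = (1 - ‖a‖) * ((1 + ‖a‖) * (1 - ‖ω z‖ ^ 2)) := by rw [hid]; ring
  exact le_of_mul_le_mul_left key (sub_pos.mpr ha)

end Complex

theorem hasDerivAt_mul_div_sqrt_one_sub_sq (C r t : ℝ) (ht : 0 < 1 - r ^ 2 * t ^ 2) :
    HasDerivAt (fun τ => C * τ / √(1 - r ^ 2 * τ ^ 2))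
      (C / ((1 - r ^ 2 * t ^ 2) * √(1 - r ^ 2 * t ^ 2))) t := by
  have hsq : HasDerivAt (fun τ => 1 - r ^ 2 * τ ^ 2) (-(r ^ 2 * (2 * t))) t := by
    simpa using ((hasDerivAt_pow 2 t).const_mul (r ^ 2)).const_sub 1
  have hnum : HasDerivAt (fun τ => C * τ) C t := by
    simpa using (hasDerivAt_id t).const_mul C
  refine (hnum.div (hsq.sqrt ht.ne') (Real.sqrt_pos.2 ht).ne').congr_deriv ?_
  have hroot_sq := Real.sq_sqrt ht.le
  field_simp
  linear_combination (-C * r ^ 2 * t ^ 2) * hroot_sq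

theorem DifferentiableAt.hasDerivAt_ofReal_mul {F : ℂ → ℂ} {z : ℂ} {t : ℝ}
    (hF : DifferentiableAt ℂ F (t * z)) :
    HasDerivAt (fun s : ℝ => F (s * z)) (deriv F (t * z) * z) t := by
  have hline : HasDerivAt (fun w : ℂ => w * z) z t := by
    simpa using (hasDerivAt_id (t : ℂ)).mul_const z
  exact (hF.hasDerivAt.comp (t : ℂ) hline).comp_ofReal

theorem norm_sub_le_of_norm_deriv_le {F : ℂ → ℂ} {K : ℝ}
    (hF : DifferentiableOn ℂ F (ball 0 1))
    (hbound : ∀ w ∈ ball (0 : ℂ) 1, ‖deriv F w‖ ≤ K / ((1 - ‖w‖ ^ 2) * √(1 - ‖w‖ ^ 2)))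
    {z : ℂ} (hz : z ∈ ball 0 1) :
    ‖F z - F 0‖ ≤ K * ‖z‖ / √(1 - ‖z‖ ^ 2) := by
  set r := ‖z‖
  have hr : r < 1 := mem_ball_zero_iff.mp hz
  have hnorm : ∀ t ∈ Icc (0 : ℝ) 1, ‖(t : ℂ) * z‖ = t * r := fun t ht => by
    rw [norm_mul, Complex.norm_real, Real.norm_of_nonneg ht.1]
  have hlt : ∀ t ∈ Icc (0 : ℝ) 1, t * r < 1 := fun t ht =>
    (mul_le_of_le_one_left (norm_nonneg z) ht.2).trans_lt hr
  have hmem : ∀ t ∈ Icc (0 : ℝ) 1, (t : ℂ) * z ∈ ball (0 : ℂ) 1 := fun t ht => by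
    rw [mem_ball_zero_iff, hnorm t ht]; exact hlt t ht
  have hpos : ∀ t ∈ Icc (0 : ℝ) 1, 0 < 1 - r ^ 2 * t ^ 2 := fun t ht => by
    nlinarith [hlt t ht, mul_nonneg ht.1 (norm_nonneg z)]
  have hf : ContinuousOn (fun t : ℝ => F (t * z) - F 0) (Icc 0 1) :=
    (hF.continuousOn.comp (by fun_prop) hmem).sub continuousOn_const
  have hf' : ∀ t ∈ Ico (0 : ℝ) 1, HasDerivWithinAt (fun t : ℝ => F (t * z) - F 0)
      (deriv F (t * z) * z) (Ici t) t := fun t ht =>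
    ((hF.differentiableAt (isOpen_ball.mem_nhds (hmem t (Ico_subset_Icc_self ht)))
      |>.hasDerivAt_ofReal_mul).sub_const (F 0)).hasDerivWithinAt
  have hB : ContinuousOn (fun τ => K * r * τ / √(1 - r ^ 2 * τ ^ 2)) (Icc 0 1) :=
    ContinuousOn.div (by fun_prop) (by fun_prop) fun t ht => (Real.sqrt_pos.2 (hpos t ht)).ne'
  have hB' : ∀ t ∈ Ico (0 : ℝ) 1, HasDerivWithinAt (fun τ => K * r * τ / √(1 - r ^ 2 * τ ^ 2))
      (K * r / ((1 - r ^ 2 * t ^ 2) * √(1 - r ^ 2 * t ^ 2))) (Ici t) t := fun t ht =>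
    (hasDerivAt_mul_div_sqrt_one_sub_sq (K * r) r t
      (hpos t (Ico_subset_Icc_self ht))).hasDerivWithinAt
  have hbound' : ∀ t ∈ Ico (0 : ℝ) 1,
      ‖deriv F (t * z) * z‖ ≤ K * r / ((1 - r ^ 2 * t ^ 2) * √(1 - r ^ 2 * t ^ 2)) := by
    intro t ht
    have h := hbound _ (hmem t (Ico_subset_Icc_self ht))
    rw [hnorm t (Ico_subset_Icc_self ht), mul_pow, mul_comm (t ^ 2)] at h
    rw [norm_mul, mul_div_right_comm]
    exact mul_le_mul_of_nonneg_right h (norm_nonneg z)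
  simpa using image_norm_le_of_norm_deriv_right_le_deriv_boundary' hf hf' (by simp) hB hB'
    hbound' (right_mem_Icc.2 zero_le_one)

noncomputable def dilatation (h g : ℂ → ℂ) (z : ℂ) : ℂ := deriv g z / deriv h z

def IsSensePreserving (h g : ℂ → ℂ) : Prop := ∀ z ∈ ball (0 : ℂ) 1, ‖deriv g z‖ < ‖deriv h z‖

section SensePreserving

variable {h g : ℂ → ℂ}

theorem IsSensePreserving.deriv_ne_zero (hsp : IsSensePreserving h g) {z : ℂ}
    (hz : z ∈ ball 0 1) : deriv h z ≠ 0 :=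
  norm_pos_iff.mp ((norm_nonneg _).trans_lt (hsp z hz))

theorem dilatation_mapsTo_ball (hsp : IsSensePreserving h g) :
    MapsTo (dilatation h g) (ball 0 1) (ball 0 1) := fun z hz => by
  rw [mem_ball_zero_iff, dilatation, norm_div,
    div_lt_one ((norm_nonneg _).trans_lt (hsp z hz))]
  exact hsp z hz

theorem differentiableOn_dilatation (hsp : IsSensePreserving h g)
    (hh : DifferentiableOn ℂ h (ball 0 1))
    (hg : DifferentiableOn ℂ g (ball 0 1)) : DifferentiableOn ℂ (dilatation h g) (ball 0 1) :=
  ((hg.analyticOnNhd isOpen_ball).deriv.differentiableOn).div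
    ((hh.analyticOnNhd isOpen_ball).deriv.differentiableOn)
    fun _ hz => hsp.deriv_ne_zero hz

theorem jacobian_eq_mul_one_sub_norm_dilatation_sq (hsp : IsSensePreserving h g)
    {z : ℂ} (hz : z ∈ ball 0 1) :
    jacobian h g z = ‖deriv h z‖ ^ 2 * (1 - ‖dilatation h g z‖ ^ 2) := by
  have := norm_pos_iff.mpr (hsp.deriv_ne_zero hz)
  rw [jacobian, dilatation, norm_div]
  field_simp

theorem mul_one_sub_norm_sq_le_jacobian (hsp : IsSensePreserving h g)
    (hh : DifferentiableOn ℂ h (ball 0 1))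
    (hg : DifferentiableOn ℂ g (ball 0 1)) {z : ℂ} (hz : z ∈ ball 0 1) :
    ‖deriv h z‖ ^ 2 * ((1 - ‖dilatation h g 0‖) / (1 + ‖dilatation h g 0‖)) * (1 - ‖z‖ ^ 2)
      ≤ jacobian h g z := by
  have hpick := Complex.one_sub_norm_mul_one_sub_norm_sq_le_of_mapsTo_ball
    (differentiableOn_dilatation hsp hh hg) (dilatation_mapsTo_ball hsp) hz
  rw [jacobian_eq_mul_one_sub_norm_dilatation_sq hsp hz, mul_assoc, div_mul_eq_mul_div]
  gcongr
  rw [div_le_iff₀ (by positivity)]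
  linarith

theorem mul_sqrt_abs_jacobian_le_betaH (hβ : InBH h g) {z : ℂ}
    (hz : z ∈ ball 0 1) : (1 - ‖z‖ ^ 2) * √|jacobian h g z| ≤ betaH h g :=
  le_csSup hβ ⟨z, hz, rfl⟩

theorem norm_deriv_le_of_inBH (hsp : IsSensePreserving h g)
    (hh : DifferentiableOn ℂ h (ball 0 1))
    (hg : DifferentiableOn ℂ g (ball 0 1)) (hβ : InBH h g) {z : ℂ} (hz : z ∈ ball 0 1) :
    ‖deriv h z‖ ≤ betaH h g * √((1 + ‖dilatation h g 0‖) / (1 - ‖dilatation h g 0‖))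
      / ((1 - ‖z‖ ^ 2) * √(1 - ‖z‖ ^ 2)) := by
  set c := ‖dilatation h g 0‖
  have hc : c < 1 := mem_ball_zero_iff.mp (dilatation_mapsTo_ball hsp (mem_ball_self one_pos))
  have hq : 0 < (1 - c) / (1 + c) := div_pos (by linarith) (by positivity)
  have hs : 0 < 1 - ‖z‖ ^ 2 := by nlinarith [mem_ball_zero_iff.mp hz, norm_nonneg z]
  have hinv : √((1 + c) / (1 - c)) = (√((1 - c) / (1 + c)))⁻¹ := by
    rw [← Real.sqrt_inv, inv_div]
  rw [hinv, ← div_eq_mul_inv, div_div, le_div_iff₀ (by positivity)]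
  calc ‖deriv h z‖ * (√((1 - c) / (1 + c)) * ((1 - ‖z‖ ^ 2) * √(1 - ‖z‖ ^ 2)))
      = (1 - ‖z‖ ^ 2) * √(‖deriv h z‖ ^ 2 * ((1 - c) / (1 + c)) * (1 - ‖z‖ ^ 2)) := by
        rw [Real.sqrt_mul (by positivity), Real.sqrt_mul (by positivity),
          Real.sqrt_sq (norm_nonneg _)]
        ring
    _ ≤ (1 - ‖z‖ ^ 2) * √|jacobian h g z| := by
        gcongr
        exact (mul_one_sub_norm_sq_le_jacobian hsp hh hg hz).trans (le_abs_self _)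
    _ ≤ betaH h g := mul_sqrt_abs_jacobian_le_betaH hβ hz

end SensePreserving

/-- **Growth estimate in `B_H`.**  If `f = h + conj g` is sense-preserving with `β(f) < ∞`,
`g(0) = 0` and `c₀ = g'(0)/h'(0)`, then for `|z| = r < 1` we get
`max{|h(z)-h(0)|, |g(z)|} ≤ β(f)·√((1+|c₀|)/(1-|c₀|))·r/√(1-r²)`. -/
theorem growth_estimate_BH (h g : ℂ → ℂ) (c₀ : ℂ)
    (hh : DifferentiableOn ℂ h (Metric.ball 0 1))
    (hg : DifferentiableOn ℂ g (Metric.ball 0 1))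
    (hsp : ∀ z ∈ Metric.ball (0 : ℂ) 1, ‖deriv g z‖ < ‖deriv h z‖)
    (hβ : InBH h g) (g0 : g 0 = 0)
    (hc₀ : c₀ = deriv g 0 / deriv h 0) :
    ∀ z ∈ Metric.ball (0 : ℂ) 1,
      max ‖h z - h 0‖ ‖g z‖
        ≤ betaH h g * Real.sqrt ((1 + ‖c₀‖) / (1 - ‖c₀‖))
            * ‖z‖ / Real.sqrt (1 - ‖z‖ ^ 2) := by
  intro z hz
  have hc₀' : c₀ = dilatation h g 0 := hc₀
  have hderiv_h (w : ℂ) (hw : w ∈ ball (0 : ℂ) 1) := hc₀' ▸ norm_deriv_le_of_inBH hsp hh hg hβ hw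
  have hderiv_g (w : ℂ) (hw : w ∈ ball (0 : ℂ) 1) := (hsp w hw).le.trans (hderiv_h w hw)
  have hgz := norm_sub_le_of_norm_deriv_le hg hderiv_g hz
  rw [g0, sub_zero] at hgz
  exact max_le (norm_sub_le_of_norm_deriv_le hh hderiv_h hz) hgz
end

section
/- Fix t ∈ [0,1) and let g(z) = 2·(1−z)^{−1/2} + 2·(1−t)·(1−z)^{1/2} (principal branches) for z in the unit disk. Then for every ε > 0, (1−x)^{1/2−ε}·|g(x)| → ∞ as x → 1⁻ along the real axis. In particular, the growth estimate |g(z)| = O(1/√(1−|z|)) for the co-analytic part of sense-preserving Bloch-type mappings is sharp in order of magnitude. -/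
open Metric Set Filter Topology

/-!
On the radius `(0, 1)` both terms of `g` are positive reals, so `‖g x‖` is at least its first
term `2 (1 - x)^{-1/2}`. Hence `(1 - x)^{1/2 - ε} ‖g x‖ ≥ 2 (1 - x)^{-ε}`, which tends to `∞`.
-/

lemma tendsto_one_sub_nhdsWithin_Ioo_one :
    Tendsto (fun x : ℝ => 1 - x) (𝓝[Ioo 0 1] 1) (𝓝[>] 0) := by
  refine tendsto_nhdsWithin_of_tendsto_nhds_of_eventually_within _ ?_ ?_
  · exact ((continuous_sub_left (1 : ℝ)).tendsto' 1 0 (sub_self 1)).mono_left nhdsWithin_le_nhds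
  · filter_upwards [self_mem_nhdsWithin] with x hx
    exact sub_pos.2 hx.2

lemma two_rpow_neg_half_le_norm {t s : ℝ} (ht : t ≤ 1) (hs : 0 < s) :
    2 * s ^ (-(1 / 2) : ℝ) ≤
      ‖2 * (s : ℂ) ^ (-(1 / 2) : ℂ) + 2 * (1 - (t : ℂ)) * (s : ℂ) ^ ((1 / 2) : ℂ)‖ := by
  have hreal : 2 * (s : ℂ) ^ (-(1 / 2) : ℂ) + 2 * (1 - (t : ℂ)) * (s : ℂ) ^ ((1 / 2) : ℂ) =
      ((2 * s ^ (-(1 / 2) : ℝ) + 2 * (1 - t) * s ^ ((1 / 2) : ℝ) : ℝ) : ℂ) := by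
    push_cast [Complex.ofReal_cpow hs.le]
    rfl
  have hsecond : 0 ≤ 2 * (1 - t) * s ^ ((1 / 2) : ℝ) := by
    have : 0 ≤ 1 - t := sub_nonneg.2 ht
    positivity
  rw [hreal, Complex.norm_real, Real.norm_of_nonneg (by positivity)]
  exact le_add_of_nonneg_right hsecond

lemma two_rpow_neg_le_rpow_mul_norm {t s : ℝ} (ht : t ≤ 1) (hs : 0 < s) (ε : ℝ) :
    2 * s ^ (-ε) ≤ s ^ (1 / 2 - ε) *
      ‖2 * (s : ℂ) ^ (-(1 / 2) : ℂ) + 2 * (1 - (t : ℂ)) * (s : ℂ) ^ ((1 / 2) : ℂ)‖ :=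
  calc 2 * s ^ (-ε) = s ^ (1 / 2 - ε) * (2 * s ^ (-(1 / 2) : ℝ)) := by
        rw [mul_left_comm, ← Real.rpow_add hs]; ring_nf
    _ ≤ _ := mul_le_mul_of_nonneg_left (two_rpow_neg_half_le_norm ht hs) (by positivity)

/-- **Sharpness of the growth estimate for the co-analytic part.**  For `t ∈ [0,1)` and
`g(z) = 2(1-z)^{-1/2} + 2(1-t)(1-z)^{1/2}` on the unit disk, one has, for every `ε > 0`,
`(1-x)^{1/2-ε}·|g(x)| → ∞` as `x → 1⁻` along the real axis. -/
theorem coanalytic_growth_sharp (t : ℝ) (ht : t ∈ Set.Ico (0 : ℝ) 1) (g : ℂ → ℂ)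
    (hg : ∀ z ∈ Metric.ball (0 : ℂ) 1,
      g z = 2 * (1 - z) ^ (-(1 / 2) : ℂ) + 2 * (1 - (t : ℂ)) * (1 - z) ^ ((1 / 2) : ℂ)) :
    ∀ ε > (0 : ℝ),
      Filter.Tendsto (fun x : ℝ => (1 - x) ^ (1 / 2 - ε) * ‖g (x : ℂ)‖)
        (nhdsWithin 1 (Set.Ioo 0 1)) Filter.atTop := by
  intro ε hε
  have hlower : ∀ᶠ x : ℝ in 𝓝[Ioo 0 1] 1, 2 * (1 - x) ^ (-ε) ≤ (1 - x) ^ (1 / 2 - ε) * ‖g x‖ := by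
    filter_upwards [self_mem_nhdsWithin] with x hx
    have hball : (x : ℂ) ∈ ball (0 : ℂ) 1 := by
      simpa [abs_of_pos hx.1] using hx.2
    have hcast : 1 - (x : ℂ) = ((1 - x : ℝ) : ℂ) := by push_cast; rfl
    rw [hg x hball, hcast]
    exact two_rpow_neg_le_rpow_mul_norm ht.2.le (sub_pos.2 hx.2) ε
  refine tendsto_atTop_mono' _ hlower ?_
  exact ((tendsto_rpow_neg_nhdsGT_zero (neg_neg_of_pos hε)).comp
    tendsto_one_sub_nhdsWithin_Ioo_one).const_mul_atTop two_pos
end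

section
/- The real function φ(x) = ((x+2)/(x−1))^{(x−1)/2} · ((x+2)/x) is strictly increasing on [2, ∞) and tends to e^{3/2} as x → ∞; in particular φ(x) < e^{3/2} for all x ≥ 2. -/
open Filter Real Set Topology

/-!
On `x > 1`, `log φ(x) = (x - 1)/2 · (log (x + 2) - log (x - 1)) + log (x + 2) - log x` has
derivative `(log (x + 2) - log (x - 1))/2 - 3/(2(x + 2)) - 2/(x(x + 2))`, which is positive by the
bound `2(a - b)/(a + b) ≤ log a - log b` applied on both halves of `[x - 1, x + 2]` (applied once
to the whole interval it is too weak for `x < 4`).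
Writing `(x + 2)/(x - 1) = 1 + (3/2)/((x - 1)/2)` gives the limit `e^{3/2}`, and a strictly
increasing function stays strictly below its limit.
-/

lemma Real.two_mul_sub_div_add_le_log_sub_log {a b : ℝ} (hb : 0 < b) (hab : b ≤ a) :
    2 * (a - b) / (a + b) ≤ log a - log b := by
  calc 2 * (a - b) / (a + b) = 2 * ((a - b) / b) / ((a - b) / b + 2) := by
        rw [div_add' _ _ _ hb.ne', mul_div_assoc', div_div_div_cancel_right₀ hb.ne']
        ring_nf
    _ ≤ log (1 + (a - b) / b) := le_log_one_add_of_nonneg (div_nonneg (sub_nonneg.2 hab) hb.le)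
    _ = log a - log b := by
        rw [← log_div (by linarith) hb.ne', one_add_div hb.ne', add_sub_cancel]

lemma StrictMonoOn.lt_of_tendsto_atTop {α β : Type*} [LinearOrder α] [NoMaxOrder α]
    [TopologicalSpace β] [Preorder β] [OrderClosedTopology β] {f : α → β} {a x : α} {L : β}
    (hf : StrictMonoOn f (Ioi a)) (hL : Tendsto f atTop (𝓝 L)) (hx : a < x) : f x < L := by
  have : Nonempty α := ⟨x⟩
  obtain ⟨y, hxy⟩ := exists_gt x
  have hy : y ∈ Ioi a := hx.trans hxy
  refine (hf hx hy hxy).trans_le (ge_of_tendsto hL ?_)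
  filter_upwards [eventually_ge_atTop y] with z hz
  exact hf.monotoneOn hy (hy.out.trans_le hz) hz

namespace BlochCoeff

noncomputable def factor (x : ℝ) : ℝ := ((x + 2) / (x - 1)) ^ ((x - 1) / 2) * ((x + 2) / x)

noncomputable def logFactor (x : ℝ) : ℝ :=
  (x - 1) / 2 * (log (x + 2) - log (x - 1)) + (log (x + 2) - log x)

lemma factor_eq_exp_logFactor {x : ℝ} (hx : 1 < x) : factor x = exp (logFactor x) := by
  have hx2 : 0 < x + 2 := by linarith
  have hx1 : 0 < x - 1 := by linarith
  have hx0 : 0 < x := by linarith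
  rw [factor, rpow_def_of_pos (by positivity), ← exp_log (by positivity : 0 < (x + 2) / x),
    ← exp_add, log_div hx2.ne' hx1.ne', log_div hx2.ne' hx0.ne', logFactor]
  ring_nf

lemma hasDerivAt_logFactor {x : ℝ} (hx : 1 < x) :
    HasDerivAt logFactor
      ((log (x + 2) - log (x - 1)) / 2 - 3 / (2 * (x + 2)) - 2 / (x * (x + 2))) x := by
  have hx2 : x + 2 ≠ 0 := by linarith
  have hx1 : x - 1 ≠ 0 := by linarith
  have hx0 : x ≠ 0 := by linarith
  have hlog2 : HasDerivAt (fun y ↦ log (y + 2)) (1 / (x + 2)) x := by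
    simpa using ((hasDerivAt_id x).add_const 2).log hx2
  have hlog1 : HasDerivAt (fun y ↦ log (y - 1)) (1 / (x - 1)) x := by
    simpa using ((hasDerivAt_id x).sub_const 1).log hx1
  have hcoef : HasDerivAt (fun y : ℝ ↦ (y - 1) / 2) (1 / 2) x := by
    simpa using ((hasDerivAt_id x).sub_const 1).div_const 2
  refine ((hcoef.mul (hlog2.sub hlog1)).add (hlog2.sub (hasDerivAt_log hx0))).congr_deriv ?_
  simp only [Pi.sub_apply]
  field_simp
  ring

lemma logFactor_deriv_pos {x : ℝ} (hx : 1 < x) :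
    0 < (log (x + 2) - log (x - 1)) / 2 - 3 / (2 * (x + 2)) - 2 / (x * (x + 2)) := by
  have hx0 : 0 < x := by linarith
  have h4 : 0 < 4 * x - 1 := by linarith
  have upper : 6 / (4 * x + 5) ≤ log (x + 2) - log (x + 1 / 2) := by
    convert two_mul_sub_div_add_le_log_sub_log (a := x + 2) (b := x + 1 / 2)
      (by linarith) (by linarith) using 1
    rw [div_eq_div_iff (by linarith) (by linarith)]
    ring
  have lower : 6 / (4 * x - 1) ≤ log (x + 1 / 2) - log (x - 1) := by
    convert two_mul_sub_div_add_le_log_sub_log (a := x + 1 / 2) (b := x - 1)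
      (by linarith) (by linarith) using 1
    rw [div_eq_div_iff (by linarith) (by linarith)]
    ring
  have key : (6 / (4 * x + 5) + 6 / (4 * x - 1)) / 2 - 3 / (2 * (x + 2)) - 2 / (x * (x + 2))
      = (8 * x ^ 2 - x + 20) / (2 * x * (x + 2) * (4 * x + 5) * (4 * x - 1)) := by
    field_simp
    ring
  have hpos : 0 < (8 * x ^ 2 - x + 20) / (2 * x * (x + 2) * (4 * x + 5) * (4 * x - 1)) :=
    div_pos (by nlinarith) (by positivity)
  linarith

lemma strictMonoOn_logFactor : StrictMonoOn logFactor (Ioi 1) := by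
  refine strictMonoOn_of_deriv_pos (convex_Ioi 1)
    (fun x hx ↦ (hasDerivAt_logFactor hx).continuousAt.continuousWithinAt) fun x hx ↦ ?_
  rw [interior_Ioi] at hx
  rw [(hasDerivAt_logFactor hx).deriv]
  exact logFactor_deriv_pos hx

lemma strictMonoOn_factor : StrictMonoOn factor (Ioi 1) := fun x hx y hy hxy ↦ by
  rw [factor_eq_exp_logFactor hx, factor_eq_exp_logFactor hy]
  exact exp_lt_exp.2 (strictMonoOn_logFactor hx hy hxy)

lemma tendsto_factor_atTop : Tendsto factor atTop (𝓝 (exp (3 / 2))) := by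
  have hhalf : Tendsto (fun x : ℝ ↦ (x - 1) / 2) atTop atTop :=
    (tendsto_atTop_add_const_right _ (-1) tendsto_id).atTop_div_const two_pos
  have hpow := (tendsto_one_add_div_rpow_exp (3 / 2)).comp hhalf
  have hratio : Tendsto (fun x : ℝ ↦ 1 + 2 / x) atTop (𝓝 1) := by
    simpa using tendsto_const_nhds.add ((tendsto_const_nhds (x := (2 : ℝ))).div_atTop tendsto_id)
  refine (mul_one (exp (3 / 2)) ▸ hpow.mul hratio).congr' ?_
  filter_upwards [eventually_gt_atTop 1] with x hx
  have hx1 : x - 1 ≠ 0 := by linarith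
  have hx0 : x ≠ 0 := by linarith
  simp only [Function.comp_apply, factor]
  congr 2
  · field_simp
    ring
  · field_simp

end BlochCoeff

/-- **The auxiliary function in the coefficient estimate.**  The function
`φ(x) = ((x+2)/(x-1))^{(x-1)/2}·((x+2)/x)` is strictly increasing on `[2, ∞)`, tends to
`e^{3/2}` as `x → ∞`, and satisfies `φ(x) < e^{3/2}` for all `x ≥ 2`. -/
theorem phi_increasing_to_exp_three_halves (φ : ℝ → ℝ)
    (hφ : ∀ x : ℝ, φ x = ((x + 2) / (x - 1)) ^ ((x - 1) / 2) * ((x + 2) / x)) :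
    StrictMonoOn φ (Set.Ici 2)
    ∧ Filter.Tendsto φ Filter.atTop (nhds (Real.exp (3 / 2)))
    ∧ ∀ x : ℝ, 2 ≤ x → φ x < Real.exp (3 / 2) := by
  obtain rfl : φ = BlochCoeff.factor := funext hφ
  have hIci : Ici (2 : ℝ) ⊆ Ioi 1 := Ici_subset_Ioi.2 one_lt_two
  exact ⟨BlochCoeff.strictMonoOn_factor.mono hIci, BlochCoeff.tendsto_factor_atTop,
    fun x hx ↦ BlochCoeff.strictMonoOn_factor.lt_of_tendsto_atTop
      BlochCoeff.tendsto_factor_atTop (hIci hx)⟩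
end
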